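/- With A = a_{ij}(x)y^i y^j, β = b_i(x)y^i smooth, A > 0, β > 0, m ∈ ℝ, m ∉ {−1, 0, 1}, let F̄ = A^{(m+1)/2}/β^m + β and L = F̄². If A₀A_ℓ = 0, A_{0ℓ} = 2A_{x^ℓ}, β₀β_ℓ = 0, β_{0ℓ} = 2β_{x^ℓ}, and A_ℓβ₀ + A₀β_ℓ = 0 for all ℓ, then L_{x^k y^ℓ}y^k − 2L_{x^ℓ} = 0, i.e. F̄ is locally dually flat. -/

import Mathlib

open scoped BigOperators


/-- Partial derivative in the base variable `x^k`. -/
noncomputable def pdx {n : ℕ} (f : (Fin n → ℝ) → (Fin n → ℝ) → ℝ) (k : Fin n)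
    (x y : Fin n → ℝ) : ℝ := fderiv ℝ (fun x' => f x' y) x (Pi.single k 1)

/-- Partial derivative in the fiber variable `y^l`. -/
noncomputable def pdy {n : ℕ} (f : (Fin n → ℝ) → (Fin n → ℝ) → ℝ) (l : Fin n)
    (x y : Fin n → ℝ) : ℝ := fderiv ℝ (fun y' => f x y') y (Pi.single l 1)

/-- `f_0 = f_{x^k} y^k` (sum over `k`). -/
noncomputable def der0 {n : ℕ} (f : (Fin n → ℝ) → (Fin n → ℝ) → ℝ)
    (x y : Fin n → ℝ) : ℝ := ∑ k, pdx f k x y * y k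

/-- `f_{0l} = f_{x^k y^l} y^k` (sum over `k`). -/
noncomputable def der0l {n : ℕ} (f : (Fin n → ℝ) → (Fin n → ℝ) → ℝ) (l : Fin n)
    (x y : Fin n → ℝ) : ℝ := ∑ k, pdy (pdx f k) l x y * y k

/-- The Riemannian quadratic form `A(x,y) = a_{ij}(x) y^i y^j`. -/
noncomputable def quadA {n : ℕ} (a : (Fin n → ℝ) → Fin n → Fin n → ℝ)
    (x y : Fin n → ℝ) : ℝ := ∑ i, ∑ j, a x i j * y i * y j

/-- The 1-form `β(x,y) = b_i(x) y^i`. -/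
noncomputable def oneform {n : ℕ} (b : (Fin n → ℝ) → Fin n → ℝ)
    (x y : Fin n → ℝ) : ℝ := ∑ i, b x i * y i


open ContinuousLinearMap in
lemma aux_hasFDerivAt_quad {n : ℕ} (c : Fin n → Fin n → ℝ) (y : Fin n → ℝ) :
    HasFDerivAt (fun y' : Fin n → ℝ => ∑ i, ∑ j, c i j * y' i * y' j)
      (∑ i, ∑ j, ((c i j * y i) • (proj j : (Fin n → ℝ) →L[ℝ] ℝ) +
        y j • (c i j • (proj i : (Fin n → ℝ) →L[ℝ] ℝ)))) y := by
  apply HasFDerivAt.fun_sum; intro i _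
  apply HasFDerivAt.fun_sum; intro j _
  exact ((proj i : (Fin n → ℝ) →L[ℝ] ℝ).hasFDerivAt.const_mul (c i j)).mul
    (proj j : (Fin n → ℝ) →L[ℝ] ℝ).hasFDerivAt

open ContinuousLinearMap in
lemma aux_quad_eval {n : ℕ} (c : Fin n → Fin n → ℝ) (y : Fin n → ℝ) (l : Fin n) :
    (∑ i, ∑ j, ((c i j * y i) • (proj j : (Fin n → ℝ) →L[ℝ] ℝ) +
        y j • (c i j • (proj i : (Fin n → ℝ) →L[ℝ] ℝ)))) (Pi.single l 1)
      = (∑ i, c i l * y i) + ∑ j, c l j * y j := by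
  simp [ContinuousLinearMap.sum_apply, Pi.single_apply, mul_ite, ite_mul,
    Finset.sum_ite_eq, Finset.sum_ite_eq', Finset.sum_add_distrib]
  exact Finset.sum_congr rfl fun j _ => mul_comm _ _

open ContinuousLinearMap in
lemma aux_hasFDerivAt_lin {n : ℕ} (d : Fin n → ℝ) (y : Fin n → ℝ) :
    HasFDerivAt (fun y' : Fin n → ℝ => ∑ i, d i * y' i)
      (∑ i, d i • (proj i : (Fin n → ℝ) →L[ℝ] ℝ)) y := by
  apply HasFDerivAt.fun_sum; intro i _
  exact (proj i : (Fin n → ℝ) →L[ℝ] ℝ).hasFDerivAt.const_mul (d i)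

open ContinuousLinearMap in
lemma aux_lin_eval {n : ℕ} (d : Fin n → ℝ) (l : Fin n) :
    (∑ i, d i • (proj i : (Fin n → ℝ) →L[ℝ] ℝ)) (Pi.single l 1) = d l := by
  simp [ContinuousLinearMap.sum_apply, Pi.single_apply, Finset.sum_ite_eq]


lemma aux_eval2 {n : ℕ} (g : Fin n → Fin n → (Fin n → ℝ) →L[ℝ] ℝ) (y w : Fin n → ℝ) :
    (∑ i, ∑ j, y j • (y i • g i j)) w = ∑ i, ∑ j, g i j w * y i * y j := by
  simp only [ContinuousLinearMap.sum_apply, ContinuousLinearMap.smul_apply, smul_eq_mul]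
  exact Finset.sum_congr rfl fun i _ => Finset.sum_congr rfl fun j _ => by ring

lemma aux_eval1 {n : ℕ} (g : Fin n → (Fin n → ℝ) →L[ℝ] ℝ) (y w : Fin n → ℝ) :
    (∑ i, y i • g i) w = ∑ i, g i w * y i := by
  simp only [ContinuousLinearMap.sum_apply, ContinuousLinearMap.smul_apply, smul_eq_mul]
  exact Finset.sum_congr rfl fun i _ => by ring


lemma aux_fderiv_sq {E : Type*} [NormedAddCommGroup E] [NormedSpace ℝ E]
    (P m : ℝ) {u v : E → ℝ} {U V : E →L[ℝ] ℝ} {x : E}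
    (hu : HasFDerivAt u U x) (hv : HasFDerivAt v V x)
    (hupos : 0 < u x) (hvpos : 0 < v x) (w : E) :
    fderiv ℝ (fun x => (u x ^ P / v x ^ m + v x) ^ 2) x w
      = 2 * (u x ^ P * (v x ^ m)⁻¹ + v x) *
        (P * u x ^ (P - 1) * U w * (v x ^ m)⁻¹
          - u x ^ P * (m * v x ^ (m - 1) * V w) * ((v x ^ m) ^ 2)⁻¹ + V w) := by
  have hvm : v x ^ m ≠ 0 := (Real.rpow_pos_of_pos hvpos m).ne'
  have hu1 : HasFDerivAt (fun x => u x ^ P) ((P * u x ^ (P-1)) • U) x :=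
    hu.rpow_const (Or.inl hupos.ne')
  have hv1 : HasFDerivAt (fun x => v x ^ m) ((m * v x ^ (m-1)) • V) x :=
    hv.rpow_const (Or.inl hvpos.ne')
  have hinv : HasFDerivAt (fun x => (v x ^ m)⁻¹)
      ((-((v x ^ m) ^ 2)⁻¹) • ((m * v x ^ (m-1)) • V)) x :=
    (hasDerivAt_inv hvm).comp_hasFDerivAt x hv1
  have hq := hu1.mul hinv
  have hF := hq.add hv
  have hL := hF.mul hF
  have hL2 : HasFDerivAt (fun x => (u x ^ P / v x ^ m + v x) ^ 2)
      ((u x ^ P * (v x ^ m)⁻¹ + v x) •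
          (u x ^ P • ((-((v x ^ m) ^ 2)⁻¹) • ((m * v x ^ (m-1)) • V)) +
            (v x ^ m)⁻¹ • ((P * u x ^ (P-1)) • U) + V) +
        (u x ^ P * (v x ^ m)⁻¹ + v x) •
          (u x ^ P • ((-((v x ^ m) ^ 2)⁻¹) • ((m * v x ^ (m-1)) • V)) +
            (v x ^ m)⁻¹ • ((P * u x ^ (P-1)) • U) + V)) x := by
    exact hL.congr_of_eventuallyEq (Filter.Eventually.of_forall fun y => by simp [div_eq_mul_inv, pow_two])
  rw [hL2.fderiv]
  simp only [ContinuousLinearMap.add_apply, ContinuousLinearMap.smul_apply, smul_eq_mul]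
  ring

theorem genKropinaRanders_locally_dually_flat {n : ℕ}
    (a : (Fin n → ℝ) → Fin n → Fin n → ℝ) (b : (Fin n → ℝ) → Fin n → ℝ)
    (m : ℝ) (hm0 : m ≠ 0) (hm1 : m ≠ -1) (hm2 : m ≠ 1)
    (ha : ∀ i j, ContDiff ℝ (⊤ : ℕ∞) (fun x => a x i j)) (hsym : ∀ x i j, a x i j = a x j i)
    (hb : ∀ i, ContDiff ℝ (⊤ : ℕ∞) (fun x => b x i))
    (x0 y0 : Fin n → ℝ) (hA : 0 < quadA a x0 y0) (hβ : 0 < oneform b x0 y0)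
    (h1 : ∀ l : Fin n, der0 (quadA a) x0 y0 * pdy (quadA a) l x0 y0 = 0)
    (h2 : ∀ l : Fin n, der0l (quadA a) l x0 y0 = 2 * pdx (quadA a) l x0 y0)
    (h3 : ∀ l : Fin n, der0 (oneform b) x0 y0 * b x0 l = 0)
    (h4 : ∀ l : Fin n, der0l (oneform b) l x0 y0 = 2 * pdx (oneform b) l x0 y0)
    (h5 : ∀ l : Fin n,
      der0 (quadA a) x0 y0 * b x0 l
        + der0 (oneform b) x0 y0 * pdy (quadA a) l x0 y0 = 0) :
    ∀ l : Fin n,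
      der0l (fun x y => ((quadA a x y) ^ ((m + 1) / 2 : ℝ) / (oneform b x y) ^ (m : ℝ) + oneform b x y) ^ 2) l x0 y0
        - 2 * pdx (fun x y => ((quadA a x y) ^ ((m + 1) / 2 : ℝ) / (oneform b x y) ^ (m : ℝ) + oneform b x y) ^ 2) l x0 y0 = 0 := by
  intro l
  -- x-direction derivatives of the quadratic and linear forms
  have hxA : ∀ y : Fin n → ℝ, HasFDerivAt (fun x' => quadA a x' y)
      (∑ i, ∑ j, y j • (y i • fderiv ℝ (fun x => a x i j) x0)) x0 := by
    intro y
    simp only [quadA]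
    exact HasFDerivAt.fun_sum fun i _ => HasFDerivAt.fun_sum fun j _ =>
      ((((ha i j).differentiable (by simp) x0).hasFDerivAt.mul_const (y i)).mul_const (y j))
  have hxB : ∀ y : Fin n → ℝ, HasFDerivAt (fun x' => oneform b x' y)
      (∑ i, y i • fderiv ℝ (fun x => b x i) x0) x0 := by
    intro y
    simp only [oneform]
    exact HasFDerivAt.fun_sum fun i _ => (((hb i).differentiable (by simp) x0).hasFDerivAt.mul_const (y i))
  -- pdx of the quadratic and linear forms
  have hpdxA : ∀ (k : Fin n) (y : Fin n → ℝ), pdx (quadA a) k x0 y = (∑ i, ∑ j, fderiv ℝ (fun x => a x i j) x0 (Pi.single k 1) * y i * y j) := by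
    intro k y
    simp only [pdx]
    rw [(hxA y).fderiv]
    exact aux_eval2 _ y _
  have hpdxB : ∀ (k : Fin n) (y : Fin n → ℝ), pdx (oneform b) k x0 y = (∑ i, fderiv ℝ (fun x => b x i) x0 (Pi.single k 1) * y i) := by
    intro k y
    simp only [pdx]
    rw [(hxB y).fderiv]
    exact aux_eval1 _ y _
  have hder0A : der0 (quadA a) x0 y0 = ∑ k, (∑ i, ∑ j, fderiv ℝ (fun x => a x i j) x0 (Pi.single k 1) * y0 i * y0 j) * y0 k := by
    simp only [der0]
    exact Finset.sum_congr rfl fun k _ => by rw [hpdxA]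
  have hder0B : der0 (oneform b) x0 y0 = ∑ k, (∑ i, fderiv ℝ (fun x => b x i) x0 (Pi.single k 1) * y0 i) * y0 k := by
    simp only [der0]
    exact Finset.sum_congr rfl fun k _ => by rw [hpdxB]
  -- y-direction derivative of the quadratic form
  have hAq0 : HasFDerivAt (fun y' => quadA a x0 y')
      (∑ i, ∑ j, ((a x0 i j * y0 i) • (ContinuousLinearMap.proj j : (Fin n → ℝ) →L[ℝ] ℝ) +
        y0 j • (a x0 i j • (ContinuousLinearMap.proj i : (Fin n → ℝ) →L[ℝ] ℝ)))) y0 := by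
    simp only [quadA]
    exact aux_hasFDerivAt_quad (a x0) y0
  have hpdyA : ∀ l' : Fin n, pdy (quadA a) l' x0 y0
      = (∑ i, a x0 i l' * y0 i) + ∑ j, a x0 l' j * y0 j := by
    intro l'
    simp only [pdy]
    rw [hAq0.fderiv]
    exact aux_quad_eval (a x0) y0 l'
  -- A_0 = 0
  have hA0 : ∑ k, (∑ i, ∑ j, fderiv ℝ (fun x => a x i j) x0 (Pi.single k 1) * y0 i * y0 j) * y0 k = 0 := by
    have hE : ∑ l' : Fin n, ((∑ i, a x0 i l' * y0 i) + ∑ j, a x0 l' j * y0 j) * y0 l'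
        = 2 * quadA a x0 y0 := by
      simp only [quadA]
      have e1 : ∀ l' : Fin n, ((∑ i, a x0 i l' * y0 i) + ∑ j, a x0 l' j * y0 j) * y0 l'
          = (∑ i, a x0 i l' * y0 i * y0 l') + ∑ j, a x0 l' j * y0 j * y0 l' := fun l' => by
        rw [add_mul, Finset.sum_mul, Finset.sum_mul]
      rw [Finset.sum_congr rfl fun l' _ => e1 l', Finset.sum_add_distrib]
      have e3 : ∑ l' : Fin n, ∑ i, a x0 i l' * y0 i * y0 l' = ∑ i, ∑ j, a x0 i j * y0 i * y0 j := by
        rw [Finset.sum_comm]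
      have e2 : ∑ l' : Fin n, ∑ j, a x0 l' j * y0 j * y0 l' = ∑ i, ∑ j, a x0 i j * y0 i * y0 j :=
        Finset.sum_congr rfl fun i _ => Finset.sum_congr rfl fun j _ => by ring
      rw [e3, e2]; ring
    have h12 : (∑ k, (∑ i, ∑ j, fderiv ℝ (fun x => a x i j) x0 (Pi.single k 1) * y0 i * y0 j) * y0 k) * (2 * quadA a x0 y0) = 0 := by
      rw [← hE, Finset.mul_sum]
      refine Finset.sum_eq_zero fun l' _ => ?_
      have h1l := h1 l'
      rw [hder0A, hpdyA l'] at h1l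
      calc (∑ k, (∑ i, ∑ j, fderiv ℝ (fun x => a x i j) x0 (Pi.single k 1) * y0 i * y0 j) * y0 k) * (((∑ i, a x0 i l' * y0 i) + ∑ j, a x0 l' j * y0 j) * y0 l')
          = ((∑ k, (∑ i, ∑ j, fderiv ℝ (fun x => a x i j) x0 (Pi.single k 1) * y0 i * y0 j) * y0 k) * ((∑ i, a x0 i l' * y0 i) + ∑ j, a x0 l' j * y0 j)) * y0 l' := by
            ring
        _ = 0 := by rw [h1l, zero_mul]
    rcases mul_eq_zero.mp h12 with h | h
    · exact h
    · exact absurd h (mul_pos two_pos hA).ne'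
  -- β_0 = 0
  have hB0 : ∑ k, (∑ i, fderiv ℝ (fun x => b x i) x0 (Pi.single k 1) * y0 i) * y0 k = 0 := by
    have hEB : ∑ l' : Fin n, b x0 l' * y0 l' = oneform b x0 y0 := by
      simp only [oneform]
    have h32 : (∑ k, (∑ i, fderiv ℝ (fun x => b x i) x0 (Pi.single k 1) * y0 i) * y0 k) * oneform b x0 y0 = 0 := by
      rw [← hEB, Finset.mul_sum]
      refine Finset.sum_eq_zero fun l' _ => ?_
      have h3l := h3 l'
      rw [hder0B] at h3l
      calc (∑ k, (∑ i, fderiv ℝ (fun x => b x i) x0 (Pi.single k 1) * y0 i) * y0 k) * (b x0 l' * y0 l')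
          = ((∑ k, (∑ i, fderiv ℝ (fun x => b x i) x0 (Pi.single k 1) * y0 i) * y0 k) * b x0 l') * y0 l' := by ring
        _ = 0 := by rw [h3l, zero_mul]
    rcases mul_eq_zero.mp h32 with h | h
    · exact h
    · exact absurd h hβ.ne'
  -- mixed second derivatives of A and β
  have hmixA : ∀ k : Fin n, pdy (pdx (quadA a) k) l x0 y0 = ((∑ i, fderiv ℝ (fun x => a x i l) x0 (Pi.single k 1) * y0 i) + ∑ j, fderiv ℝ (fun x => a x l j) x0 (Pi.single k 1) * y0 j) := by
    intro k
    simp only [pdy]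
    have hfun : (fun y' => pdx (quadA a) k x0 y')
        = fun y' => ∑ i, ∑ j, fderiv ℝ (fun x => a x i j) x0 (Pi.single k 1) * y' i * y' j :=
      funext fun y => hpdxA k y
    rw [hfun]
    simp only [(aux_hasFDerivAt_quad (fun i j => fderiv ℝ (fun x => a x i j) x0 (Pi.single k 1)) y0).fderiv,
      aux_quad_eval]
  have hmixB : ∀ k : Fin n, pdy (pdx (oneform b) k) l x0 y0 = fderiv ℝ (fun x => b x l) x0 (Pi.single k 1) := by
    intro k
    simp only [pdy]
    have hfun : (fun y' => pdx (oneform b) k x0 y')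
        = fun y' => ∑ i, fderiv ℝ (fun x => b x i) x0 (Pi.single k 1) * y' i :=
      funext fun y => hpdxB k y
    rw [hfun]
    simp only [(aux_hasFDerivAt_lin (fun i => fderiv ℝ (fun x => b x i) x0 (Pi.single k 1)) y0).fderiv,
      aux_lin_eval]
  have hS3 : ∑ k, ((∑ i, fderiv ℝ (fun x => a x i l) x0 (Pi.single k 1) * y0 i) + ∑ j, fderiv ℝ (fun x => a x l j) x0 (Pi.single k 1) * y0 j) * y0 k = 2 * (∑ i, ∑ j, fderiv ℝ (fun x => a x i j) x0 (Pi.single l 1) * y0 i * y0 j) := by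
    have h2l := h2 l
    simp only [der0l] at h2l
    rw [Finset.sum_congr rfl fun k _ => congrArg (· * y0 k) (hmixA k), hpdxA l] at h2l
    exact h2l
  have hS4 : ∑ k, fderiv ℝ (fun x => b x l) x0 (Pi.single k 1) * y0 k = 2 * (∑ i, fderiv ℝ (fun x => b x i) x0 (Pi.single l 1) * y0 i) := by
    have h4l := h4 l
    simp only [der0l] at h4l
    rw [Finset.sum_congr rfl fun k _ => congrArg (· * y0 k) (hmixB k), hpdxB l] at h4l
    exact h4l
  -- positivity in a neighborhood
  have contA : Continuous (fun y : Fin n → ℝ => quadA a x0 y) := by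
    simp only [quadA]
    exact continuous_finset_sum _ fun i _ => continuous_finset_sum _ fun j _ =>
      (continuous_const.mul (continuous_apply i)).mul (continuous_apply j)
  have contB : Continuous (fun y : Fin n → ℝ => oneform b x0 y) := by
    simp only [oneform]
    exact continuous_finset_sum _ fun i _ => continuous_const.mul (continuous_apply i)
  have hevent : ∀ᶠ y in nhds y0, 0 < quadA a x0 y ∧ 0 < oneform b x0 y :=
    (continuousAt_const.eventually_lt contA.continuousAt hA).and
      (continuousAt_const.eventually_lt contB.continuousAt hβ)
  -- explicit formula for pdx of the metric squared
  have pdxLf : ∀ (k : Fin n) (y : Fin n → ℝ), 0 < quadA a x0 y → 0 < oneform b x0 y →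
      fderiv ℝ (fun x' => (quadA a x' y ^ ((m + 1) / 2 : ℝ) / oneform b x' y ^ m + oneform b x' y) ^ 2) x0 (Pi.single k 1) = 2 * (quadA a x0 y ^ ((m + 1) / 2 : ℝ) * (oneform b x0 y ^ m)⁻¹ + oneform b x0 y) * (((m + 1) / 2 : ℝ) * quadA a x0 y ^ (((m + 1) / 2 : ℝ) - 1) * (∑ i, ∑ j, fderiv ℝ (fun x => a x i j) x0 (Pi.single k 1) * y i * y j) * (oneform b x0 y ^ m)⁻¹ - quadA a x0 y ^ ((m + 1) / 2 : ℝ) * (m * oneform b x0 y ^ (m - 1) * (∑ i, fderiv ℝ (fun x => b x i) x0 (Pi.single k 1) * y i)) * ((oneform b x0 y ^ m) ^ 2)⁻¹ + (∑ i, fderiv ℝ (fun x => b x i) x0 (Pi.single k 1) * y i)) := by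
    intro k y hAy hBy
    have h := aux_fderiv_sq ((m + 1) / 2 : ℝ) m (hxA y) (hxB y) hAy hBy (Pi.single k 1)
    simp only [aux_eval2, aux_eval1] at h
    exact h
  -- reduce the goal
  simp only [der0l, pdy, pdx]
  obtain ⟨C1, C2, C3, C4, hC3, hC4, hterm⟩ :
      ∃ C1 C2 C3 C4 : ℝ,
        C3 = (2 * (quadA a x0 y0 ^ ((m + 1) / 2 : ℝ) * (oneform b x0 y0 ^ m)⁻¹ + oneform b x0 y0) * (((m + 1) / 2 : ℝ) * quadA a x0 y0 ^ (((m + 1) / 2 : ℝ) - 1) * (oneform b x0 y0 ^ m)⁻¹)) ∧ C4 = (2 * (quadA a x0 y0 ^ ((m + 1) / 2 : ℝ) * (oneform b x0 y0 ^ m)⁻¹ + oneform b x0 y0) * (1 - quadA a x0 y0 ^ ((m + 1) / 2 : ℝ) * m * oneform b x0 y0 ^ (m - 1) * ((oneform b x0 y0 ^ m) ^ 2)⁻¹)) ∧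
        ∀ k : Fin n,
          fderiv ℝ (fun y' => fderiv ℝ (fun x' => (quadA a x' y' ^ ((m + 1) / 2 : ℝ) / oneform b x' y' ^ m + oneform b x' y') ^ 2) x0 (Pi.single k 1)) y0 (Pi.single l 1) * y0 k
            = C1 * ((∑ i, ∑ j, fderiv ℝ (fun x => a x i j) x0 (Pi.single k 1) * y0 i * y0 j) * y0 k) + (C2 * ((∑ i, fderiv ℝ (fun x => b x i) x0 (Pi.single k 1) * y0 i) * y0 k)
              + (C3 * (((∑ i, fderiv ℝ (fun x => a x i l) x0 (Pi.single k 1) * y0 i) + ∑ j, fderiv ℝ (fun x => a x l j) x0 (Pi.single k 1) * y0 j) * y0 k) + C4 * (fderiv ℝ (fun x => b x l) x0 (Pi.single k 1) * y0 k))) := by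
    refine ⟨(2 * (quadA a x0 y0 ^ ((m + 1) / 2 : ℝ) * (-((oneform b x0 y0 ^ m) ^ 2)⁻¹ * (m * oneform b x0 y0 ^ (m - 1) * b x0 l)) + (oneform b x0 y0 ^ m)⁻¹ * (((m + 1) / 2 : ℝ) * quadA a x0 y0 ^ (((m + 1) / 2 : ℝ) - 1) * ((∑ i, a x0 i l * y0 i) + ∑ j, a x0 l j * y0 j)) + b x0 l) * (((m + 1) / 2 : ℝ) * quadA a x0 y0 ^ (((m + 1) / 2 : ℝ) - 1) * (oneform b x0 y0 ^ m)⁻¹) + 2 * (quadA a x0 y0 ^ ((m + 1) / 2 : ℝ) * (oneform b x0 y0 ^ m)⁻¹ + oneform b x0 y0) * (((m + 1) / 2 : ℝ) * quadA a x0 y0 ^ (((m + 1) / 2 : ℝ) - 1) * (-((oneform b x0 y0 ^ m) ^ 2)⁻¹ * (m * oneform b x0 y0 ^ (m - 1) * b x0 l)) + (oneform b x0 y0 ^ m)⁻¹ * (((m + 1) / 2 : ℝ) * ((((m + 1) / 2 : ℝ) - 1) * quadA a x0 y0 ^ (((m + 1) / 2 : ℝ) - 1 - 1) * ((∑ i,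 a x0 i l * y0 i) + ∑ j, a x0 l j * y0 j))))), (2 * (quadA a x0 y0 ^ ((m + 1) / 2 : ℝ) * (-((oneform b x0 y0 ^ m) ^ 2)⁻¹ * (m * oneform b x0 y0 ^ (m - 1) * b x0 l)) + (oneform b x0 y0 ^ m)⁻¹ * (((m + 1) / 2 : ℝ) * quadA a x0 y0 ^ (((m + 1) / 2 : ℝ) - 1) * ((∑ i, a x0 i l * y0 i) + ∑ j, a x0 l j * y0 j)) + b x0 l) * (1 - quadA a x0 y0 ^ ((m + 1) / 2 : ℝ) * m * oneform b x0 y0 ^ (m - 1) * ((oneform b x0 y0 ^ m) ^ 2)⁻¹) - 2 * (quadA a x0 y0 ^ ((m + 1) / 2 : ℝ) * (oneform b x0 y0 ^ m)⁻¹ + oneform b x0 y0) * (quadA a x0 y0 ^ ((m + 1) / 2 : ℝ) * m * oneform b x0 y0 ^ (m - 1) * (-(((oneform b x0 y0 ^ m) ^ 2) ^ 2)⁻¹ * (2 * oneform b x0 y0 ^ m * (m * oneform b x0 y0 ^ (m - 1) * b x0 l))) + ((oneform b x0 y0 ^ m) ^ 2)⁻¹ * (quadA a x0 y0 ^ ((m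 + 1) / 2 : ℝ) * m * (m - 1) * oneform b x0 y0 ^ (m - 1 - 1) * b x0 l + m * oneform b x0 y0 ^ (m - 1) * ((m + 1) / 2 : ℝ) * quadA a x0 y0 ^ (((m + 1) / 2 : ℝ) - 1) * ((∑ i, a x0 i l * y0 i) + ∑ j, a x0 l j * y0 j)))), (2 * (quadA a x0 y0 ^ ((m + 1) / 2 : ℝ) * (oneform b x0 y0 ^ m)⁻¹ + oneform b x0 y0) * (((m + 1) / 2 : ℝ) * quadA a x0 y0 ^ (((m + 1) / 2 : ℝ) - 1) * (oneform b x0 y0 ^ m)⁻¹)), (2 * (quadA a x0 y0 ^ ((m + 1) / 2 : ℝ) * (oneform b x0 y0 ^ m)⁻¹ + oneform b x0 y0) * (1 - quadA a x0 y0 ^ ((m + 1) / 2 : ℝ) * m * oneform b x0 y0 ^ (m - 1) * ((oneform b x0 y0 ^ m) ^ 2)⁻¹)), rfl, rfl, fun k => ?_⟩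
    have hEqk : (fun y' => fderiv ℝ (fun x' => (quadA a x' y' ^ ((m + 1) / 2 : ℝ) / oneform b x' y' ^ m + oneform b x' y') ^ 2) x0 (Pi.single k 1)) =ᶠ[nhds y0]
        (fun y => 2 * (quadA a x0 y ^ ((m + 1) / 2 : ℝ) * (oneform b x0 y ^ m)⁻¹ + oneform b x0 y) * (((m + 1) / 2 : ℝ) * quadA a x0 y ^ (((m + 1) / 2 : ℝ) - 1) * (∑ i, ∑ j, fderiv ℝ (fun x => a x i j) x0 (Pi.single k 1) * y i * y j) * (oneform b x0 y ^ m)⁻¹ - quadA a x0 y ^ ((m + 1) / 2 : ℝ) * (m * oneform b x0 y ^ (m - 1) * (∑ i, fderiv ℝ (fun x => b x i) x0 (Pi.single k 1) * y i)) * ((oneform b x0 y ^ m) ^ 2)⁻¹ + (∑ i, fderiv ℝ (fun x => b x i) x0 (Pi.single k 1) * y i))) :=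
      hevent.mono fun y hy => pdxLf k y hy.1 hy.2
    have hBq0 := aux_hasFDerivAt_lin (b x0) y0
    have hAq1 := aux_hasFDerivAt_quad (a x0) y0
    have hAxk := aux_hasFDerivAt_quad (fun i j => fderiv ℝ (fun x => a x i j) x0 (Pi.single k 1)) y0
    have hBxk := aux_hasFDerivAt_lin (fun i => fderiv ℝ (fun x => b x i) x0 (Pi.single k 1)) y0
    have hAP := hAq1.rpow_const (p := ((m + 1) / 2 : ℝ)) (Or.inl hA.ne')
    have hAP1 := hAq1.rpow_const (p := ((m + 1) / 2 : ℝ) - 1) (Or.inl hA.ne')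
    have hBm := hBq0.rpow_const (p := m) (Or.inl hβ.ne')
    have hBm1 := hBq0.rpow_const (p := m - 1) (Or.inl hβ.ne')
    have hBmne : oneform b x0 y0 ^ m ≠ 0 := (Real.rpow_pos_of_pos hβ m).ne'
    have hinv1 := (hasDerivAt_inv hBmne).comp_hasFDerivAt y0 hBm
    have hsq := (hasDerivAt_pow 2 (oneform b x0 y0 ^ m)).comp_hasFDerivAt y0 hBm
    have hsqne : (oneform b x0 y0 ^ m) ^ 2 ≠ 0 := pow_ne_zero _ hBmne
    have hinv2 := (hasDerivAt_inv hsqne).comp_hasFDerivAt y0 hsq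
    have hF := (hAP.mul hinv1).add hBq0
    have hT1 := ((hAP1.const_mul (((m + 1) / 2 : ℝ))).mul hAxk).mul hinv1
    have hT2 := (hAP.mul ((hBm1.const_mul m).mul hBxk)).mul hinv2
    have hH := (hT1.sub hT2).add hBxk
    have hG := (hF.const_mul 2).mul hH
    rw [(hG.congr_of_eventuallyEq hEqk).fderiv]
    simp only [quadA, oneform, ContinuousLinearMap.add_apply, ContinuousLinearMap.coe_sub',
      Pi.sub_apply, Pi.mul_apply, Pi.add_apply, ContinuousLinearMap.smul_apply, aux_quad_eval, aux_lin_eval, smul_eq_mul,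
      Function.comp, pow_one, Nat.cast_ofNat]
    ring
  rw [Finset.sum_congr rfl fun k _ => hterm k, Finset.sum_add_distrib, Finset.sum_add_distrib,
    Finset.sum_add_distrib, ← Finset.mul_sum, ← Finset.mul_sum, ← Finset.mul_sum, ← Finset.mul_sum,
    hA0, hB0, hS3, hS4, pdxLf l y0 hA hβ, hC3, hC4]
  ring
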